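/- Let s, s_j : ℝ → ℝ² (j = 1, …, M) and v, ω, v_j, ω_j : ℝ → ℝ³ be differentiable, let K̄ ∈ ℝ, and let κ : ℝ → ℝ be differentiable. For each j define θ_j(t) = (x_j(t), y_j(t), −(x_j(t)² + y_j(t)²)/2) where s_j = (x_j, y_j). Define the depth estimate χ̂(t) = κ(t) − K̄·Σ_{j=1}^{M} ⟨θ_j(t), v_j(t)⟩ and suppose κ satisfies κ'(t) = f_u(s(t), χ̂(t), v(t), ω(t)) + K̄·Σ_{j=1}^{M} ( ⟨θ_j(t), v_j'(t)⟩ − ⟨Ω(s_j(t), v_j(t)), f_m(s_j(t), ω_j(t))⟩ − ‖Ω(s_j(t), v_j(t))‖²·χ̂(t) ). Then χ̂ is differentiable and satisfies χ̂'(t) = f_u(s(t), χ̂(t), v(t), ω(t)) + K̄·Σ_{j=1}^{M} ⟨Ω(s_j(t), v_j(t)), s_j'(t) − f_m(s_j(t), ω_j(t)) − χ̂(t)·Ω(s_j(t), v_j(t))⟩. -/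

import Mathlib

open scoped InnerProductSpace

noncomputable section

abbrev E2 := EuclideanSpace ℝ (Fin 2)
abbrev E3 := EuclideanSpace ℝ (Fin 3)

/-- `f_m(s, ω)` of the perspective dynamical system. -/
def fm (s : E2) (w : E3) : E2 :=
  WithLp.toLp 2 ![s 0 * s 1 * w 0 - (1 + s 0 ^ 2) * w 1 + s 1 * w 2,
    (1 + s 1 ^ 2) * w 0 - s 0 * s 1 * w 1 - s 0 * w 2]

/-- The regressor `Ω(s, v)`. -/
def Omg (s : E2) (v : E3) : E2 := WithLp.toLp 2 ![s 0 * v 2 - v 0, s 1 * v 2 - v 1]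

/-- Inverse-depth dynamics `f_u(s, χ, v, ω)`. -/
def fu (s : E2) (χ : ℝ) (v w : E3) : ℝ :=
  v 2 * χ ^ 2 + (s 1 * w 0 - s 0 * w 1) * χ

/-- `θ_j(t) = (x_j, y_j, −(x_j² + y_j²)/2)`. -/
def theta (s : E2) : E3 := WithLp.toLp 2 ![s 0, s 1, -(s 0 ^ 2 + s 1 ^ 2) / 2]

/-!
The weight `θ` is chosen so that the gradient of `s ↦ ⟪θ(s), v⟫` is `-Ω(s, v)`. Hence
`d/dt ⟪θ(s_j), v_j⟫ = ⟪θ(s_j), v̇_j⟫ - ⟪Ω(s_j, v_j), ṡ_j⟫`, and subtracting `K̄` times the sum of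
these derivatives from `κ̇` trades the `v̇_j` terms of the implemented update for the `ṡ_j` terms
of the observer.
-/

lemma inner_theta (s : E2) (v : E3) :
    ⟪theta s, v⟫_ℝ = s 0 * v 0 + s 1 * v 1 - (s 0 ^ 2 + s 1 ^ 2) / 2 * v 2 := by
  simp only [theta, PiLp.inner_apply, RCLike.inner_apply, conj_trivial, Fin.sum_univ_three,
    Matrix.cons_val_zero, Matrix.cons_val_one, Matrix.cons_val_two, Matrix.head_cons,
    Matrix.tail_cons]
  ring

lemma inner_Omg (s w : E2) (v : E3) :
    ⟪Omg s v, w⟫_ℝ = (s 0 * v 2 - v 0) * w 0 + (s 1 * v 2 - v 1) * w 1 := by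
  simp only [Omg, PiLp.inner_apply, RCLike.inner_apply, conj_trivial, Fin.sum_univ_two,
    Matrix.cons_val_zero, Matrix.cons_val_one]
  ring

lemma HasDerivAt.euclideanSpace_apply {n : ℕ} {f : ℝ → EuclideanSpace ℝ (Fin n)}
    {f' : EuclideanSpace ℝ (Fin n)} {t : ℝ} (hf : HasDerivAt f f' t) (i : Fin n) :
    HasDerivAt (fun u => f u i) (f' i) t := by
  exact (EuclideanSpace.proj i).hasFDerivAt.comp_hasDerivAt t hf

lemma hasDerivAt_inner_theta {s : ℝ → E2} {v : ℝ → E3} {s' : E2} {v' : E3} {t : ℝ}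
    (hs : HasDerivAt s s' t) (hv : HasDerivAt v v' t) :
    HasDerivAt (fun u => ⟪theta (s u), v u⟫_ℝ)
      (⟪theta (s t), v'⟫_ℝ - ⟪Omg (s t) (v t), s'⟫_ℝ) t := by
  simp only [inner_theta, inner_Omg]
  have hx := hs.euclideanSpace_apply 0
  have hy := hs.euclideanSpace_apply 1
  refine (((hx.fun_mul (hv.euclideanSpace_apply 0)).fun_add
    (hy.fun_mul (hv.euclideanSpace_apply 1))).fun_sub ((((hx.fun_pow 2).fun_add
    (hy.fun_pow 2)).div_const 2).fun_mul (hv.euclideanSpace_apply 2))).congr_deriv ?_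
  push_cast
  ring

theorem reduced_order_observer_dynamics_general
    (M : ℕ) (s : ℝ → E2) (v ω : ℝ → E3)
    (sj : Fin M → ℝ → E2) (vj ωj : Fin M → ℝ → E3)
    (sj' : Fin M → ℝ → E2) (vj' : Fin M → ℝ → E3)
    (hsj : ∀ j t, HasDerivAt (sj j) (sj' j t) t)
    (hvj : ∀ j t, HasDerivAt (vj j) (vj' j t) t)
    (Kbar : ℝ) (κ χhat : ℝ → ℝ)
    (hχhat : ∀ t, χhat t = κ t - Kbar * ∑ j, ⟪theta (sj j t), vj j t⟫_ℝ)
    (hκ : ∀ t, HasDerivAt κ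
      (fu (s t) (χhat t) (v t) (ω t)
        + Kbar * ∑ j, (⟪theta (sj j t), vj' j t⟫_ℝ
            - ⟪Omg (sj j t) (vj j t), fm (sj j t) (ωj j t)⟫_ℝ
            - ‖Omg (sj j t) (vj j t)‖ ^ 2 * χhat t)) t) :
    ∀ t, HasDerivAt χhat
      (fu (s t) (χhat t) (v t) (ω t)
        + Kbar * ∑ j, ⟪Omg (sj j t) (vj j t),
            sj' j t - fm (sj j t) (ωj j t) - χhat t • Omg (sj j t) (vj j t)⟫_ℝ) t := by
  intro t
  have hsum : HasDerivAt (fun u => ∑ j, ⟪theta (sj j u), vj j u⟫_ℝ)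
      (∑ j, (⟪theta (sj j t), vj' j t⟫_ℝ - ⟪Omg (sj j t) (vj j t), sj' j t⟫_ℝ)) t :=
    HasDerivAt.fun_sum fun j _ => hasDerivAt_inner_theta (hsj j t) (hvj j t)
  refine (((hκ t).sub (hsum.const_mul Kbar)).congr_of_eventuallyEq
    (Filter.Eventually.of_forall hχhat)).congr_deriv ?_
  rw [add_sub_assoc, ← mul_sub, ← Finset.sum_sub_distrib]
  congr 2
  refine Finset.sum_congr rfl fun j _ => ?_
  rw [inner_sub_right, inner_sub_right, real_inner_smul_right, real_inner_self_eq_norm_sq]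
  ring

/-- The reduced-order concurrent-learning observer `χ̂ = κ + γ` with
`γ = −K̄·Σ_j ⟨θ_j, v_j⟩` obeys the implemented observer dynamics without requiring
measurement of `ṡ`. -/
theorem reduced_order_observer_dynamics
    (M : ℕ) (s : ℝ → E2) (v ω : ℝ → E3)
    (sj : Fin M → ℝ → E2) (vj ωj : Fin M → ℝ → E3)
    (sj' : Fin M → ℝ → E2) (vj' ωj' : Fin M → ℝ → E3)
    (s' : ℝ → E2) (v' ω' : ℝ → E3)
    (hs : ∀ t, HasDerivAt s (s' t) t)
    (hv : ∀ t, HasDerivAt v (v' t) t)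
    (hω : ∀ t, HasDerivAt ω (ω' t) t)
    (hsj : ∀ j t, HasDerivAt (sj j) (sj' j t) t)
    (hvj : ∀ j t, HasDerivAt (vj j) (vj' j t) t)
    (hωj : ∀ j t, HasDerivAt (ωj j) (ωj' j t) t)
    (Kbar : ℝ) (κ χhat : ℝ → ℝ)
    (hκdiff : Differentiable ℝ κ)
    (hχhat : ∀ t, χhat t = κ t - Kbar * ∑ j, ⟪theta (sj j t), vj j t⟫_ℝ)
    (hκ : ∀ t, HasDerivAt κ
      (fu (s t) (χhat t) (v t) (ω t)
        + Kbar * ∑ j, (⟪theta (sj j t), vj' j t⟫_ℝ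
            - ⟪Omg (sj j t) (vj j t), fm (sj j t) (ωj j t)⟫_ℝ
            - ‖Omg (sj j t) (vj j t)‖ ^ 2 * χhat t)) t) :
    ∀ t, HasDerivAt χhat
      (fu (s t) (χhat t) (v t) (ω t)
        + Kbar * ∑ j, ⟪Omg (sj j t) (vj j t),
            sj' j t - fm (sj j t) (ωj j t) - χhat t • Omg (sj j t) (vj j t)⟫_ℝ) t :=
  reduced_order_observer_dynamics_general M s v ω sj vj ωj sj' vj' hsj hvj Kbar κ χhat hχhat hκ
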